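/- (Plane wave reflected off the unit sphere.) Define F₂ : ℂ → ℂ by F₂(ξ) = −(1/2)ξ√(1 + ξξ̄) and r₂ : ℂ → ℝ by r₂(ξ) = 2/√(1 + ξξ̄). Then for every ξ ∈ ℂ, r₂ is real-differentiable at ξ and ∂̄r₂(ξ) = 2F₂(ξ)/(1 + ξξ̄)²; i.e. r₂ is a potential function for the line congruence (ξ, F₂(ξ)), which is the reflection of a plane wave moving down the x³-axis off the unit sphere centred at the origin (twistor function F₀ = 0, potential r₀ = 1). -/

import Mathlib

/-!
For a radial function `ξ ↦ g(|ξ|²)` the chain rule and `∂̄(ξξ̄) = ξ` give `∂̄ g(|ξ|²) = g'(|ξ|²) ξ`.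
With `g(t) = 2/√(1 + t)` we have `g'(t) = -1/(1 + t)^{3/2}`, and
`-ξ/(1 + |ξ|²)^{3/2} = 2F₂(ξ)/(1 + ξξ̄)²`.
-/

open ComplexConjugate

/-- The conjugate Wirtinger derivative `∂̄f` of a real-differentiable `f : ℂ → ℂ`. -/
noncomputable def wirtDbar (f : ℂ → ℂ) (ν : ℂ) : ℂ :=
  (1 / 2) * (fderiv ℝ f ν 1 + Complex.I * fderiv ℝ f ν Complex.I)

theorem Complex.hasFDerivAt_normSq (ξ : ℂ) :
    HasFDerivAt (fun w : ℂ => Complex.normSq w) ((2 : ℝ) • innerSL ℝ ξ) ξ := by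
  simpa only [Complex.sq_norm, ofNat_smul_eq_nsmul] using
    (hasStrictFDerivAt_norm_sq ξ).hasFDerivAt

theorem wirtDbar_ofReal_of_hasFDerivAt_smul_innerSL {f : ℂ → ℝ} {c : ℝ} {ξ : ℂ}
    (hf : HasFDerivAt f (c • innerSL ℝ ξ) ξ) :
    wirtDbar (fun w => (f w : ℂ)) ξ = c / 2 * ξ := by
  have hC : HasFDerivAt (fun w => (f w : ℂ)) (Complex.ofRealCLM.comp (c • innerSL ℝ ξ)) ξ :=
    Complex.ofRealCLM.hasFDerivAt.comp ξ hf
  rw [wirtDbar, hC.fderiv]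
  simp only [ContinuousLinearMap.comp_apply, FunLike.coe_smul, Pi.smul_apply,
    innerSL_apply_apply, Complex.inner, smul_eq_mul, Complex.ofRealCLM_apply]
  apply Complex.ext <;> simp <;> ring

theorem wirtDbar_comp_normSq {g : ℝ → ℝ} {g' : ℝ} {ξ : ℂ}
    (hg : HasDerivAt g g' (Complex.normSq ξ)) :
    wirtDbar (fun w => (g (Complex.normSq w) : ℂ)) ξ = g' * ξ := by
  have h := hg.comp_hasFDerivAt ξ (Complex.hasFDerivAt_normSq ξ)
  rw [smul_smul] at h
  rw [wirtDbar_ofReal_of_hasFDerivAt_smul_innerSL (f := fun w => g (Complex.normSq w)) h]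
  push_cast
  ring

theorem hasDerivAt_two_div_sqrt_one_add {t : ℝ} (ht : -1 < t) :
    HasDerivAt (fun s => 2 / √(1 + s)) (-1 / ((1 + t) * √(1 + t))) t := by
  have hpos : 0 < 1 + t := by linarith
  have hsqrt : HasDerivAt (fun s => √(1 + s)) (1 / (2 * √(1 + t))) t :=
    ((hasDerivAt_id t).const_add 1).sqrt hpos.ne'
  have h : HasDerivAt (fun s => 2 * (√(1 + s))⁻¹)
      (2 * (-(1 / (2 * √(1 + t))) / √(1 + t) ^ 2)) t :=
    (hsqrt.inv (Real.sqrt_pos.2 hpos).ne').const_mul 2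
  simp only [← div_eq_mul_inv] at h
  refine h.congr_deriv ?_
  rw [Real.sq_sqrt hpos.le]
  field_simp

/-- Plane wave reflected off the unit sphere: the function
`r₂(ξ) = 2/√(1 + ξξ̄)` is a potential function for the line congruence
`ξ ↦ (ξ, F₂(ξ))` with `F₂(ξ) = −½ξ√(1 + ξξ̄)`, i.e. `r₂` is real-differentiable
and `∂̄r₂ = 2F₂/(1 + ξξ̄)²` everywhere. -/
theorem plane_wave_off_unit_sphere_potential
    (F₂ : ℂ → ℂ) (r₂ : ℂ → ℝ)
    (hF₂ : ∀ ξ : ℂ, F₂ ξ = -(1 / 2) * ξ * (Real.sqrt (1 + Complex.normSq ξ) : ℂ))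
    (hr₂ : ∀ ξ : ℂ, r₂ ξ = 2 / Real.sqrt (1 + Complex.normSq ξ)) :
    ∀ ξ : ℂ,
      DifferentiableAt ℝ r₂ ξ ∧
      wirtDbar (fun w => (r₂ w : ℂ)) ξ = 2 * F₂ ξ / (1 + ξ * conj ξ) ^ 2 := by
  intro ξ
  obtain rfl : r₂ = fun w => 2 / √(1 + Complex.normSq w) := funext hr₂
  have hpos : 0 < 1 + Complex.normSq ξ := by linarith [Complex.normSq_nonneg ξ]
  have hg := hasDerivAt_two_div_sqrt_one_add (t := Complex.normSq ξ) (by linarith)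
  refine ⟨(hg.comp_hasFDerivAt ξ (Complex.hasFDerivAt_normSq ξ)).differentiableAt, ?_⟩
  rw [wirtDbar_comp_normSq hg, hF₂, Complex.mul_conj]
  have hsq : (√(1 + Complex.normSq ξ) : ℂ) ^ 2 = 1 + Complex.normSq ξ := by
    exact_mod_cast Real.sq_sqrt hpos.le
  have hs : (√(1 + Complex.normSq ξ) : ℂ) ≠ 0 := by exact_mod_cast (Real.sqrt_pos.2 hpos).ne'
  push_cast
  rw [← hsq]
  field_simp
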